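/- arXiv:2201.12301 — 10 statements merged into one kernel-verified Lean document; each statement's English description precedes it below -/
import Mathlib

section
/- Suppose n > r, the columns of V ∈ ℂ^{n×r} form a Chebyshev system (every r×r submatrix formed by r rows of V is nonsingular), and Vû is a vector of best sup-norm approximation to a. Then the maximal absolute residual |a_j − (Vû)_j| = ‖a − Vû‖_∞ is attained at at least r+1 distinct indices j. -/
/-!
If the extremal set `S = {j | |e_j| = ‖e‖_∞}` of the residual `e = a - Vû` had at most `r`
points, the Chebyshev condition would let us interpolate `e` on `S` by some `Vu`. Moving
from `û` towards `û + u` then multiplies the residual on `S` by `1 - t`, while off `S` the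
residual stays below `‖e‖_∞` for small `t > 0`; this contradicts the optimality of `û`.
-/

open Filter Topology Matrix

theorem Matrix.exists_mulVec_eq_on_of_det_ne_zero {K ι : Type*} [Field K] [Fintype ι] {r : ℕ}
    (V : Matrix ι (Fin r) K)
    (hV : ∀ f : Fin r → ι, Function.Injective f → (Matrix.of fun k i => V (f k) i).det ≠ 0)
    {S : Finset ι} (hS : S.card ≤ r) (hr : r ≤ Fintype.card ι) (y : ι → K) :
    ∃ u, ∀ j ∈ S, (V *ᵥ u) j = y j := by
  classical
  obtain ⟨T, hST, -, hT⟩ := Finset.exists_subsuperset_card_eq (Finset.subset_univ S) hS hr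
  let σ : T ≃ Fin r := Fintype.equivFinOfCardEq (by simpa using hT)
  let f : Fin r → ι := fun k => σ.symm k
  have hA : IsUnit (V.submatrix f id) := by
    rw [Matrix.isUnit_iff_isUnit_det, isUnit_iff_ne_zero]
    exact hV f (Subtype.val_injective.comp σ.symm.injective)
  obtain ⟨u, hu⟩ := Matrix.mulVec_surjective_iff_isUnit.2 hA (y ∘ f)
  refine ⟨u, fun j hj => ?_⟩
  have hfj : f (σ ⟨j, hST hj⟩) = j := by simp [f]
  rw [← hfj]
  exact congrFun hu _

theorem exists_pos_norm_sub_smul_lt {ι E : Type*} [Fintype ι] [NormedAddCommGroup E]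
    [NormedSpace ℝ E] {e w : ι → E} (he : e ≠ 0) (hw : ∀ j, ‖e j‖ = ‖e‖ → w j = e j) :
    ∃ t : ℝ, 0 < t ∧ ‖e - t • w‖ < ‖e‖ := by
  have hcoord : ∀ j, ∀ᶠ t in 𝓝[>] (0 : ℝ), ‖e j - t • w j‖ < ‖e‖ := by
    intro j
    by_cases hj : ‖e j‖ = ‖e‖
    · filter_upwards [Ioo_mem_nhdsGT one_pos] with t ⟨ht0, ht1⟩
      rw [hw j hj, show e j - t • e j = (1 - t) • e j by rw [sub_smul, one_smul], norm_smul,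
        Real.norm_of_nonneg (by linarith), hj]
      nlinarith [norm_pos_iff.2 he]
    · have hlt : ‖e j‖ < ‖e‖ := (norm_le_pi_norm e j).lt_of_ne hj
      have hcont : Continuous fun t : ℝ => ‖e j - t • w j‖ := by fun_prop
      exact nhdsWithin_le_nhds <| hcont.continuousAt.eventually_lt continuousAt_const (by simpa)
  obtain ⟨t, ht, ht0⟩ := ((eventually_all.2 hcoord).and self_mem_nhdsWithin).exists
  exact ⟨t, ht0, (pi_norm_lt_iff (norm_pos_iff.2 he)).2 ht⟩

/-- Chebyshev system + best approximation ⟹ the maximal absolute residual is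
attained at at least `r + 1` distinct indices. -/
theorem stmt_3 (n r : ℕ) (hnr : r < n) (V : Matrix (Fin n) (Fin r) ℂ) (a : Fin n → ℂ)
    (hcheb : ∀ f : Fin r → Fin n, Function.Injective f →
      (Matrix.of fun k i => V (f k) i).det ≠ 0)
    (uhat : Fin r → ℂ)
    (hopt : ∀ u : Fin r → ℂ, ‖a - V.mulVec uhat‖ ≤ ‖a - V.mulVec u‖) :
    ∃ S : Finset (Fin n), r + 1 ≤ S.card ∧
      ∀ j ∈ S, ‖a j - V.mulVec uhat j‖ = ‖a - V.mulVec uhat‖ := by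
  classical
  set e := a - V *ᵥ uhat with he_def
  refine ⟨Finset.univ.filter fun j => ‖e j‖ = ‖e‖, ?_, fun j hj => (Finset.mem_filter.1 hj).2⟩
  by_contra! hS
  have he : e ≠ 0 := by
    rintro he
    simp [he] at hS
    omega
  obtain ⟨u, hu⟩ := V.exists_mulVec_eq_on_of_det_ne_zero hcheb (Nat.le_of_lt_succ hS)
    (by simpa using hnr.le) e
  obtain ⟨t, -, hlt⟩ := exists_pos_norm_sub_smul_lt he fun j hj => hu j (by simp [hj])
  have hstep : a - V *ᵥ (uhat + (t : ℂ) • u) = e - t • V *ᵥ u := by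
    rw [Matrix.mulVec_add, Matrix.mulVec_smul, Complex.coe_smul, he_def, sub_add_eq_sub_sub]
  exact (hopt (uhat + (t : ℂ) • u)).not_gt (hstep ▸ hlt)
end

section
/- (Real Shnirelman-type theorem) Let V ∈ ℝ^{n×r} have linearly independent columns and a ∈ ℝ^n. Then μ(J) = μ_{r+1}(J): the best sup-norm approximation error of a by the columns of V over all n rows equals the maximum over all (r+1)-element row subsets of the best approximation error restricted to that subset. -/
/-!
Shrinking a row set can only decrease the best approximation error, which gives `≥`.
Conversely, fix `ε > 0` and let `M` be the right-hand side. The sets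
`K j = {u | |a j - ⟨u, v^j⟩| ≤ M + ε}` are convex in `ℝ^r`, and any `r + 1` of them meet,
since the error on those `r + 1` rows is below `M + ε` for some `u`. By Helly's theorem all
`K j` meet, and a common point has error at most `M + ε` on every row.
-/

open Module Finset
open scoped Matrix

theorem convexOn_abs_sub_linearMap {E : Type*} [AddCommGroup E] [Module ℝ E] (c : ℝ)
    (L : E →ₗ[ℝ] ℝ) : ConvexOn ℝ Set.univ fun u => |c - L u| :=
  (convexOn_norm convex_univ).comp_affineMap (AffineMap.const ℝ E c - L.toAffineMap)

section
variable {ι : Type*} [Finite ι]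

lemma biSup_le_iSup_of_nonneg {g : ι → ℝ} (hg : ∀ j, 0 ≤ g j) (p : ι → Prop) :
    ⨆ (j) (_ : p j), g j ≤ ⨆ j, g j :=
  have hsup : 0 ≤ ⨆ j, g j := Real.iSup_nonneg hg
  Real.iSup_le (fun j => Real.iSup_le (fun _ => le_ciSup (Set.finite_range g).bddAbove j) hsup)
    hsup

variable {E : Type*} {f : ι → E → ℝ}

lemma iSup_iInf_biSup_le_iInf_iSup [Nonempty E] (hf : ∀ j u, 0 ≤ f j u) (P : Set (Finset ι)) :
    ⨆ S ∈ P, ⨅ u, ⨆ j ∈ S, f j u ≤ ⨅ u, ⨆ j, f j u := by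
  have hinf : 0 ≤ ⨅ u, ⨆ j, f j u := Real.iInf_nonneg fun u => Real.iSup_nonneg (hf · u)
  refine Real.iSup_le (fun S => Real.iSup_le (fun _ => le_ciInf fun u => ?_) hinf) hinf
  have hbdd : BddBelow (Set.range fun u => ⨆ j ∈ S, f j u) :=
    ⟨0, by rintro _ ⟨u, rfl⟩; exact Real.iSup_nonneg fun j => Real.iSup_nonneg fun _ => hf j u⟩
  exact (ciInf_le hbdd u).trans (biSup_le_iSup_of_nonneg (hf · u) (· ∈ S))

end

variable {ι E : Type*} [Fintype ι] [AddCommGroup E] [Module ℝ E] [FiniteDimensional ℝ E]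
  {f : ι → E → ℝ}

theorem iInf_iSup_le_of_forall_card_eq (hconv : ∀ j, ConvexOn ℝ Set.univ (f j))
    (hf : ∀ j u, 0 ≤ f j u) (hcard : finrank ℝ E + 1 ≤ Fintype.card ι) {M : ℝ}
    (hM : ∀ S : Finset ι, #S = finrank ℝ E + 1 → ⨅ u, ⨆ j ∈ S, f j u ≤ M) :
    ⨅ u, ⨆ j, f j u ≤ M := by
  have : Nonempty ι := Fintype.card_pos_iff.mp (by omega)
  refine le_of_forall_pos_le_add fun ε hε => ?_
  obtain ⟨u, hu⟩ : (⋂ j ∈ (univ : Finset ι), {u | f j u ≤ M + ε}).Nonempty := by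
    refine Convex.helly_theorem (𝕜 := ℝ) hcard (fun j _ => by simpa using (hconv j).convex_le _)
      fun S _ hS => ?_
    obtain ⟨u, hu⟩ := exists_lt_of_ciInf_lt (lt_add_of_le_of_pos (hM S hS) hε)
    refine ⟨u, Set.mem_iInter₂.mpr fun j hj => le_trans ?_ hu.le⟩
    exact le_ciSup₂ (f := fun j (_ : j ∈ S) => f j u)
      (Set.finite_iUnion fun _ => Set.finite_range _).bddAbove j hj
  have hbdd : BddBelow (Set.range fun u => ⨆ j, f j u) :=
    ⟨0, by rintro _ ⟨u, rfl⟩; exact Real.iSup_nonneg (hf · u)⟩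
  exact (ciInf_le hbdd u).trans (ciSup_le fun j => Set.mem_iInter₂.mp hu j (mem_univ j))

theorem iInf_iSup_eq_iSup_card_eq_iInf_biSup (hconv : ∀ j, ConvexOn ℝ Set.univ (f j))
    (hf : ∀ j u, 0 ≤ f j u) (hcard : finrank ℝ E + 1 ≤ Fintype.card ι) :
    ⨅ u, ⨆ j, f j u = ⨆ S ∈ {S : Finset ι | #S = finrank ℝ E + 1}, ⨅ u, ⨆ j ∈ S, f j u := by
  refine le_antisymm (iInf_iSup_le_of_forall_card_eq hconv hf hcard fun S hS => ?_)
    (iSup_iInf_biSup_le_iInf_iSup hf _)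
  exact le_ciSup₂ (f := fun S (_ : #S = finrank ℝ E + 1) => ⨅ u, ⨆ j ∈ S, f j u)
    (Set.finite_iUnion fun _ => Set.finite_range _).bddAbove S hS

theorem stmt_5_general (n r : ℕ) (hn : r + 1 ≤ n) (V : Matrix (Fin n) (Fin r) ℝ) (a : Fin n → ℝ) :
    (⨅ u : Fin r → ℝ, ⨆ j, |a j - ∑ i, u i * V j i|) =
      ⨆ S ∈ {S : Finset (Fin n) | S.card = r + 1},
        ⨅ u : Fin r → ℝ, ⨆ j ∈ S, |a j - ∑ i, u i * V j i| := by
  have hconv (j : Fin n) : ConvexOn ℝ Set.univ fun u : Fin r → ℝ => |a j - ∑ i, u i * V j i| :=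
    convexOn_abs_sub_linearMap (a j) (LinearMap.proj j ∘ₗ Matrix.vecMulLinear Vᵀ)
  have key := iInf_iSup_eq_iSup_card_eq_iInf_biSup hconv (fun _ _ => abs_nonneg _)
    (by simpa using hn)
  simpa only [finrank_fin_fun] using key

/-- Real Shnirelman-type theorem: `μ(J) = μ_{r+1}(J)`. -/
theorem stmt_5 (n r : ℕ) (hn : r + 1 ≤ n) (V : Matrix (Fin n) (Fin r) ℝ) (a : Fin n → ℝ)
    (hV : LinearIndependent ℝ (fun i : Fin r => fun j : Fin n => V j i)) :
    (⨅ u : Fin r → ℝ, ⨆ j, |a j - ∑ i, u i * V j i|) =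
      ⨆ S ∈ {S : Finset (Fin n) | S.card = r + 1},
        ⨅ u : Fin r → ℝ, ⨆ j ∈ S, |a j - ∑ i, u i * V j i| :=
  stmt_5_general n r hn V a
end

section
/- If V ∈ ℝ^{n×r} has linearly independent columns and a is not in the column span of V, then there exists a characteristic set J' ⊆ {1,…,n} with at most r+1 elements, i.e., μ(J') = μ(J) and μ(J'') < μ(J) for every proper subset J'' ⊊ J'. -/
/-!
Each `u ↦ |a j - ⟨u, v^j⟩|` is convex, so for every level `c` the sublevel sets
`{u | |a j - ⟨u, v^j⟩| ≤ c}` are convex subsets of `ℝ^r`. Among the index sets of size at most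
`r + 1`, pick one, `S`, of largest value `μ(S)`. If `μ(S) < μ(J)`, then at a level `c` strictly
between them every `r + 1` of the sublevel sets meet, so by Helly's theorem all of them meet,
giving `μ(J) ≤ c`, a contradiction. Hence `μ(S) = μ(J)`, and any subset of `S` that is minimal
for this property is characteristic.
-/

open Finset Module

section FiniteSup

variable {ι : Type*} {g : ι → ℝ} {S T : Finset ι}

theorem Real.le_biSup_of_mem [Finite ι] {j : ι} (hj : j ∈ S) : g j ≤ ⨆ j ∈ S, g j :=
  le_ciSup_of_le (Set.finite_range _).bddAbove j (ciSup_pos (f := fun _ : j ∈ S => g j) hj).ge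

theorem Real.biSup_le {c : ℝ} (hc : 0 ≤ c) (h : ∀ j ∈ S, g j ≤ c) : ⨆ j ∈ S, g j ≤ c :=
  Real.iSup_le (fun j => Real.iSup_le (h j) hc) hc

theorem Real.biSup_nonneg (hg : ∀ j, 0 ≤ g j) : 0 ≤ ⨆ j ∈ S, g j :=
  Real.iSup_nonneg fun j => Real.iSup_nonneg fun _ => hg j

theorem Real.biSup_mono [Finite ι] (hg : ∀ j, 0 ≤ g j) (hST : S ⊆ T) :
    ⨆ j ∈ S, g j ≤ ⨆ j ∈ T, g j :=
  Real.biSup_le (Real.biSup_nonneg hg) fun _ hj => Real.le_biSup_of_mem (hST hj)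

end FiniteSup

section Minimax

variable {ι E : Type*} (f : E → ι → ℝ)

/-- The paper's `μ(S)`. A real `⨆` over an empty index is `0`, hence the hypothesis `0 ≤ f`
in the lemmas below. -/
noncomputable def minimax (S : Finset ι) : ℝ := ⨅ u, ⨆ j ∈ S, f u j

def IsCharacteristic [Fintype ι] (S : Finset ι) : Prop :=
  minimax f S = minimax f univ ∧ ∀ T ⊂ S, minimax f T < minimax f univ

variable {f}

theorem bddBelow_range_biSup (hf : ∀ u j, 0 ≤ f u j) (S : Finset ι) :
    BddBelow (Set.range fun u => ⨆ j ∈ S, f u j) :=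
  ⟨0, Set.forall_mem_range.2 fun u => Real.biSup_nonneg (hf u)⟩

theorem minimax_le_of_forall_le (hf : ∀ u j, 0 ≤ f u j) {S : Finset ι} {c : ℝ} (hc : 0 ≤ c)
    (u : E) (hu : ∀ j ∈ S, f u j ≤ c) : minimax f S ≤ c :=
  ciInf_le_of_le (bddBelow_range_biSup hf S) u (Real.biSup_le hc hu)

theorem minimax_mono [Finite ι] (hf : ∀ u j, 0 ≤ f u j) {S T : Finset ι} (hST : S ⊆ T) :
    minimax f S ≤ minimax f T :=
  ciInf_mono (bddBelow_range_biSup hf S) fun u => Real.biSup_mono (hf u) hST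

theorem exists_forall_lt_of_minimax_lt [Finite ι] [Nonempty E] {S : Finset ι} {c : ℝ}
    (h : minimax f S < c) : ∃ u, ∀ j ∈ S, f u j < c := by
  obtain ⟨u, hu⟩ := exists_lt_of_ciInf_lt h
  exact ⟨u, fun j hj => (Real.le_biSup_of_mem hj).trans_lt hu⟩

theorem minimax_univ [Fintype ι] : minimax f univ = ⨅ u, ⨆ j, f u j := by
  simp [minimax]

theorem exists_isCharacteristic_subset [Fintype ι] (hf : ∀ u j, 0 ≤ f u j) {S₀ : Finset ι}
    (hS₀ : minimax f S₀ = minimax f univ) : ∃ S ⊆ S₀, IsCharacteristic f S := by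
  obtain ⟨S, hSS₀, hS, hmin⟩ :=
    exists_minimal_le_of_wellFoundedLT (fun S => minimax f S = minimax f univ) S₀ hS₀
  refine ⟨S, hSS₀, hS, fun T hT => (minimax_mono hf (subset_univ T)).lt_of_ne fun hT' => ?_⟩
  exact hT.not_ge (hmin hT' hT.le)

variable [AddCommGroup E] [Module ℝ E]

theorem exists_card_le_finrank_add_one_minimax_eq [Fintype ι] [FiniteDimensional ℝ E]
    (hf : ∀ u j, 0 ≤ f u j) (hconv : ∀ j, ConvexOn ℝ Set.univ (f · j)) :
    ∃ S : Finset ι, #S ≤ finrank ℝ E + 1 ∧ minimax f S = minimax f univ := by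
  classical
  obtain ⟨S, hS, hmax⟩ := (univ.powerset.filter (#· ≤ finrank ℝ E + 1)).exists_max_image
    (minimax f) ⟨∅, by simp⟩
  simp only [mem_filter, mem_powerset, subset_univ, true_and] at hS hmax
  refine ⟨S, hS, (minimax_mono hf (subset_univ S)).antisymm (not_lt.1 fun hlt => ?_)⟩
  set c := (minimax f S + minimax f univ) / 2 with hc
  have hS_nonneg : 0 ≤ minimax f S :=
    Real.iInf_nonneg fun u => Real.biSup_nonneg (hf u)
  have hmeet : ∀ I : Finset ι, #I ≤ finrank ℝ E + 1 →
      (⋂ j ∈ I, {u | u ∈ Set.univ ∧ f u j ≤ c}).Nonempty := by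
    intro I hI
    obtain ⟨u, hu⟩ := exists_forall_lt_of_minimax_lt ((hmax I hI).trans_lt (by linarith))
    exact ⟨u, Set.mem_iInter₂.2 fun j hj => ⟨trivial, (hu j hj).le⟩⟩
  obtain ⟨u, hu⟩ := Convex.helly_theorem' (s := univ) (fun j _ => (hconv j).convex_le c)
    fun I _ => hmeet I
  have := minimax_le_of_forall_le hf (S := univ) (by linarith) u fun j _ =>
    (Set.mem_iInter₂.1 hu j (mem_univ j)).2
  linarith

theorem convexOn_abs_sub_apply (ℓ : E →ₗ[ℝ] ι → ℝ) (a : ι → ℝ) (j : ι) :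
    ConvexOn ℝ Set.univ (fun u => |a j - ℓ u j|) := by
  have habs : ConvexOn ℝ Set.univ (fun x : ℝ => |a j - x|) := by
    simpa [Function.comp_def, ← Real.norm_eq_abs] using
      convexOn_univ_norm.comp_affineMap (AffineMap.const ℝ ℝ (a j) - AffineMap.id ℝ ℝ)
  exact habs.comp_linearMap ((LinearMap.proj j).comp ℓ)

end Minimax

theorem stmt_6_general (n r : ℕ) (V : Matrix (Fin n) (Fin r) ℝ) (a : Fin n → ℝ) :
    ∃ S : Finset (Fin n), S.card ≤ r + 1 ∧
      (⨅ u : Fin r → ℝ, ⨆ j ∈ S, |a j - ∑ i, u i * V j i|) =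
        (⨅ u : Fin r → ℝ, ⨆ j, |a j - ∑ i, u i * V j i|) ∧
      ∀ T : Finset (Fin n), T ⊂ S →
        (⨅ u : Fin r → ℝ, ⨆ j ∈ T, |a j - ∑ i, u i * V j i|) <
          (⨅ u : Fin r → ℝ, ⨆ j, |a j - ∑ i, u i * V j i|) := by
  set f : (Fin r → ℝ) → Fin n → ℝ := fun u j => |a j - ∑ i, u i * V j i|
  have hf : ∀ u j, 0 ≤ f u j := fun _ _ => abs_nonneg _
  -- `∑ i, u i * V j i` is the `j`-th entry of `u ᵥ* V.transpose`
  obtain ⟨S₀, hcard, hS₀⟩ := exists_card_le_finrank_add_one_minimax_eq hf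
    (convexOn_abs_sub_apply V.transpose.vecMulLinear a)
  obtain ⟨S, hSS₀, hS, hmin⟩ := exists_isCharacteristic_subset hf hS₀
  rw [finrank_fin_fun] at hcard
  exact ⟨S, (card_le_card hSS₀).trans hcard, hS.trans minimax_univ,
    fun T hT => (hmin T hT).trans_eq minimax_univ⟩

/-- Existence of a characteristic set with at most `r+1` elements in the real case. -/
theorem stmt_6 (n r : ℕ) (hn : r < n) (V : Matrix (Fin n) (Fin r) ℝ) (a : Fin n → ℝ)
    (hV : LinearIndependent ℝ (fun i : Fin r => fun j : Fin n => V j i))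
    (ha : a ∉ Set.range V.mulVec) :
    ∃ S : Finset (Fin n), S.card ≤ r + 1 ∧
      (⨅ u : Fin r → ℝ, ⨆ j ∈ S, |a j - ∑ i, u i * V j i|) =
        (⨅ u : Fin r → ℝ, ⨆ j, |a j - ∑ i, u i * V j i|) ∧
      ∀ T : Finset (Fin n), T ⊂ S →
        (⨅ u : Fin r → ℝ, ⨆ j ∈ T, |a j - ∑ i, u i * V j i|) <
          (⨅ u : Fin r → ℝ, ⨆ j, |a j - ∑ i, u i * V j i|) :=
  stmt_6_general n r V a
end

section
/- If the columns of V ∈ ℝ^{n×r} form a Chebyshev system (every r rows are linearly independent) and a ∉ range(V), then every characteristic set contains at least r+1 indices. -/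
/-!
If `S` had at most `r` indices, enlarge it to `r` indices; by the Chebyshev condition the
corresponding `r × r` block of `V` is invertible, so some `u` interpolates `a` exactly on `S` and
`μ(S) = 0`. A characteristic set has `μ(S) = μ({1,…,n})`, so `a` would be a limit of vectors
`V u`, hence in the range of `V`, which is closed because it is finite-dimensional.
-/

open Matrix

lemma Finset.exists_injective_fin_subset_range {α : Type*} [Fintype α] {r : ℕ} (S : Finset α)
    (hS : S.card ≤ r) (hr : r ≤ Fintype.card α) :
    ∃ f : Fin r → α, Function.Injective f ∧ ↑S ⊆ Set.range f := by
  obtain ⟨S', hSS', -, hcard⟩ := Finset.exists_subsuperset_card_eq (Finset.subset_univ S) hS hr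
  let e := (S'.equivFinOfCardEq hcard).symm
  refine ⟨fun k => e k, Subtype.val_injective.comp e.injective, fun j hj => ?_⟩
  exact ⟨e.symm ⟨j, hSS' hj⟩, by simp⟩

lemma Pi.iSup_abs_sub_eq_dist {ι : Type*} [Fintype ι] (x y : ι → ℝ) :
    ⨆ j, |x j - y j| = dist x y := by
  refine le_antisymm (Real.iSup_le (fun j => ?_) dist_nonneg) ?_
  · rw [← Real.dist_eq]
    exact dist_le_pi_dist x y j
  · refine (dist_pi_le_iff (Real.iSup_nonneg fun _ => abs_nonneg _)).2 fun j => ?_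
    rw [Real.dist_eq]
    exact le_ciSup (f := fun j => |x j - y j|) (Set.finite_range _).bddAbove j

namespace Matrix

variable {ι κ : Type*} [Fintype κ]

lemma sum_mul_apply_eq_mulVec {R : Type*} [CommSemiring R] (V : Matrix ι κ R) (u : κ → R)
    (j : ι) : ∑ i, u i * V j i = (V *ᵥ u) j := by
  simp only [mulVec, dotProduct, mul_comm]

lemma exists_mulVec_comp_eq_of_det_ne_zero {K : Type*} [DecidableEq κ] [Field K]
    (V : Matrix ι κ K) (f : κ → ι) (hdet : (of fun k i => V (f k) i).det ≠ 0) (a : ι → K) :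
    ∃ u, ∀ k, (V *ᵥ u) (f k) = a (f k) := by
  obtain ⟨u, hu⟩ := mulVec_surjective_iff_isUnit.mpr
    ((isUnit_iff_isUnit_det _).mpr (isUnit_iff_ne_zero.mpr hdet)) (a ∘ f)
  exact ⟨u, congrFun hu⟩

lemma iInf_iSup_mem_abs_sub_mulVec_eq_zero {V : Matrix ι κ ℝ} {a : ι → ℝ} {S : Finset ι}
    {u : κ → ℝ} (hu : ∀ j ∈ S, (V *ᵥ u) j = a j) :
    ⨅ w, ⨆ j ∈ S, |a j - (V *ᵥ w) j| = 0 := by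
  have hnonneg : ∀ w, 0 ≤ ⨆ j ∈ S, |a j - (V *ᵥ w) j| := fun w =>
    Real.iSup_nonneg fun j => Real.iSup_nonneg fun _ => abs_nonneg _
  have hzero : ⨆ j ∈ S, |a j - (V *ᵥ u) j| = 0 := by
    simp +contextual [hu]
  exact le_antisymm (ciInf_le_of_le ⟨0, Set.forall_mem_range.2 hnonneg⟩ u hzero.le)
    (Real.iInf_nonneg hnonneg)

lemma mem_range_mulVec_of_iInf_iSup_abs_sub_eq_zero [Fintype ι] {V : Matrix ι κ ℝ}
    {a : ι → ℝ} (h : ⨅ u, ⨆ j, |a j - (V *ᵥ u) j| = 0) : a ∈ Set.range V.mulVec := by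
  have hclosed : IsClosed (Set.range V.mulVec) :=
    (LinearMap.range V.mulVecLin).closed_of_finiteDimensional
  refine hclosed.closure_subset (Metric.mem_closure_iff.2 fun ε hε => ?_)
  simp_rw [Pi.iSup_abs_sub_eq_dist] at h
  obtain ⟨u, hu⟩ := exists_lt_of_ciInf_lt (h.trans_lt hε)
  exact ⟨V *ᵥ u, ⟨u, rfl⟩, hu⟩

end Matrix

/-- For a Chebyshev system, every characteristic set contains at least `r+1` indices. -/
theorem stmt_7 (n r : ℕ) (hn : r < n) (V : Matrix (Fin n) (Fin r) ℝ) (a : Fin n → ℝ)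
    (hcheb : ∀ f : Fin r → Fin n, Function.Injective f →
      (Matrix.of fun k i => V (f k) i).det ≠ 0)
    (ha : a ∉ Set.range V.mulVec) :
    ∀ S : Finset (Fin n),
      ((⨅ u : Fin r → ℝ, ⨆ j ∈ S, |a j - ∑ i, u i * V j i|) =
          (⨅ u : Fin r → ℝ, ⨆ j, |a j - ∑ i, u i * V j i|) ∧
        ∀ T : Finset (Fin n), T ⊂ S →
          (⨅ u : Fin r → ℝ, ⨆ j ∈ T, |a j - ∑ i, u i * V j i|) <
            (⨅ u : Fin r → ℝ, ⨆ j, |a j - ∑ i, u i * V j i|)) →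
      r + 1 ≤ S.card := by
  intro S hS
  by_contra! hcard
  obtain ⟨f, hf, hSf⟩ :=
    S.exists_injective_fin_subset_range (Nat.lt_succ_iff.mp hcard) (by simpa using hn.le)
  obtain ⟨u, hu⟩ := V.exists_mulVec_comp_eq_of_det_ne_zero f (hcheb f hf) a
  have hinterp : ∀ j ∈ S, (V *ᵥ u) j = a j := fun j hj => by
    obtain ⟨k, rfl⟩ := hSf hj
    exact hu k
  simp_rw [Matrix.sum_mul_apply_eq_mulVec] at hS
  exact ha (V.mem_range_mulVec_of_iInf_iSup_abs_sub_eq_zero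
    (hS.1 ▸ iInf_iSup_mem_abs_sub_mulVec_eq_zero hinterp))
end

section
/- (Dzyadyk, residual formula) For an inconsistent system Vu = a with V ∈ ℝ^{(r+1)×r} and each D_j ≠ 0, the solution û^j of the r×r system obtained by deleting row j satisfies ⟨v^j, û^j⟩ − a_j = ((−1)^{j+1}/D_j) · Σ_{ν=1}^{r+1} (−1)^ν a_ν D_ν. -/
/-!
Append `a` to `V` as a last column. The determinant of `[V | b]` is linear in `b`, given by Laplace
expansion along the last column as `∑ ν, ± b_ν D_ν`, and it vanishes when `b` lies in the column
space of `V`. Since `û^j` solves every equation except the `j`-th, `a - V û^j` is the residual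
`-(⟨v^j, û^j⟩ - a_j)` times the `j`-th unit vector, so `det [V | a] = det [V | a - V û^j]` is that
residual times the cofactor `± D_j`. Comparing with the Laplace expansion gives the formula.
-/

open Matrix

namespace Matrix

variable {R : Type*} {n : ℕ}

def augmented (V : Matrix (Fin (n + 1)) (Fin n) R) (b : Fin (n + 1) → R) :
    Matrix (Fin (n + 1)) (Fin (n + 1)) R :=
  of fun i => Fin.snoc (V i) (b i)

@[simp]
theorem augmented_apply_last (V : Matrix (Fin (n + 1)) (Fin n) R) (b : Fin (n + 1) → R)
    (i : Fin (n + 1)) : augmented V b i (Fin.last n) = b i := by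
  simp [augmented]

@[simp]
theorem augmented_submatrix_castSucc {m : Type*} (V : Matrix (Fin (n + 1)) (Fin n) R)
    (b : Fin (n + 1) → R) (e : m → Fin (n + 1)) :
    (augmented V b).submatrix e Fin.castSucc = V.submatrix e id := by
  ext
  simp [augmented]

variable [CommRing R]

theorem det_augmented (V : Matrix (Fin (n + 1)) (Fin n) R) (b : Fin (n + 1) → R) :
    (augmented V b).det =
      ∑ ν : Fin (n + 1), (-1) ^ ((ν : ℕ) + n) * b ν * (V.submatrix ν.succAbove id).det := by
  rw [det_succ_column _ (Fin.last n)]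
  simp [Fin.succAbove_last]

theorem det_augmented_mulVec (V : Matrix (Fin (n + 1)) (Fin n) R) (u : Fin n → R) :
    (augmented V (V *ᵥ u)).det = 0 := by
  have hcol : (augmented V (V *ᵥ u)).updateCol (Fin.last n)
      (fun k => ∑ i, (Fin.snoc u 0 : Fin (n + 1) → R) i • augmented V (V *ᵥ u) k i) =
      augmented V (V *ᵥ u) := by
    ext k i
    refine Fin.lastCases ?_ (fun i => ?_) i
    · simp [augmented, Fin.sum_univ_castSucc, mulVec, dotProduct, mul_comm]
    · simp [augmented]
  rw [← hcol, det_updateCol_sum]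
  simp

theorem det_augmented_add_mulVec (V : Matrix (Fin (n + 1)) (Fin n) R) (b : Fin (n + 1) → R)
    (u : Fin n → R) : (augmented V (b + V *ᵥ u)).det = (augmented V b).det := by
  have h := det_augmented_mulVec V u
  rw [det_augmented] at h
  simp only [det_augmented, Pi.add_apply, mul_add, add_mul, Finset.sum_add_distrib, h, add_zero]

theorem det_augmented_single (V : Matrix (Fin (n + 1)) (Fin n) R) (j : Fin (n + 1)) (c : R) :
    (augmented V (Pi.single j c)).det =
      (-1) ^ ((j : ℕ) + n) * c * (V.submatrix j.succAbove id).det := by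
  rw [det_augmented, Finset.sum_eq_single j]
  · simp
  · intro ν _ hν
    simp [Pi.single_eq_of_ne hν]
  · simp

theorem mulVec_sub_eq_single {V : Matrix (Fin (n + 1)) (Fin n) R} {a : Fin (n + 1) → R}
    {u : Fin n → R} {j : Fin (n + 1)}
    (hu : (V.submatrix j.succAbove id) *ᵥ u = fun k => a (j.succAbove k)) :
    V *ᵥ u - a = Pi.single j ((V *ᵥ u) j - a j) := by
  ext k
  rcases eq_or_ne k j with rfl | hk
  · simp
  · obtain ⟨k, rfl⟩ := Fin.exists_succAbove_eq hk
    rw [Pi.sub_apply, Pi.single_eq_of_ne hk, sub_eq_zero]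
    exact congrFun hu k

theorem residual_mul_det_eq_neg_det_augmented {V : Matrix (Fin (n + 1)) (Fin n) R}
    {a : Fin (n + 1) → R} {u : Fin n → R} {j : Fin (n + 1)}
    (hu : (V.submatrix j.succAbove id) *ᵥ u = fun k => a (j.succAbove k)) :
    ((V *ᵥ u) j - a j) * ((-1) ^ ((j : ℕ) + n) * (V.submatrix j.succAbove id).det) =
      -(augmented V a).det := by
  have ha : a = Pi.single j (-((V *ᵥ u) j - a j)) + V *ᵥ u := by
    rw [Pi.single_neg, ← mulVec_sub_eq_single hu]
    abel
  conv_rhs => rw [ha, det_augmented_add_mulVec, det_augmented_single]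
  ring

theorem residual_mul_det {V : Matrix (Fin (n + 1)) (Fin n) R} {a : Fin (n + 1) → R}
    {u : Fin n → R} {j : Fin (n + 1)}
    (hu : (V.submatrix j.succAbove id) *ᵥ u = fun k => a (j.succAbove k)) :
    ((V *ᵥ u) j - a j) * (V.submatrix j.succAbove id).det =
      (-1) ^ (j : ℕ) * ∑ ν : Fin (n + 1),
        (-1) ^ ((ν : ℕ) + 1) * a ν * (V.submatrix ν.succAbove id).det := by
  have hsq : (-1 : R) ^ ((j : ℕ) + n) * (-1) ^ ((j : ℕ) + n) = 1 := by
    rw [← pow_add, Even.neg_one_pow ⟨_, rfl⟩]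
  have hsign (ν : ℕ) : -((-1 : R) ^ ((j : ℕ) + n) * (-1) ^ (ν + n)) =
      (-1) ^ (j : ℕ) * (-1) ^ (ν + 1) := by
    ring_nf
    simp
  have hsum : (-1) ^ (j : ℕ) * ∑ ν : Fin (n + 1),
      (-1) ^ ((ν : ℕ) + 1) * a ν * (V.submatrix ν.succAbove id).det =
      -((-1) ^ ((j : ℕ) + n) * (augmented V a).det) := by
    rw [det_augmented, Finset.mul_sum, Finset.mul_sum, ← Finset.sum_neg_distrib]
    refine Finset.sum_congr rfl fun ν _ => ?_
    linear_combination -a ν * (V.submatrix ν.succAbove id).det * hsign ν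
  rw [hsum]
  linear_combination (-1 : R) ^ ((j : ℕ) + n) * residual_mul_det_eq_neg_det_augmented hu -
    ((V *ᵥ u) j - a j) * (V.submatrix j.succAbove id).det * hsq

end Matrix

/-- Indices are 0-based here, 1-based in the paper. -/
theorem stmt_8_general (r : ℕ) (V : Matrix (Fin (r + 1)) (Fin r) ℝ) (a : Fin (r + 1) → ℝ)
    (D : Fin (r + 1) → ℝ) (hD : ∀ j, D j = (V.submatrix (Fin.succAbove j) id).det)
    (hDne : ∀ j, D j ≠ 0)
    (uhat : Fin (r + 1) → Fin r → ℝ)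
    (huhat : ∀ j, (V.submatrix (Fin.succAbove j) id).mulVec (uhat j) =
      fun k => a (Fin.succAbove j k)) :
    ∀ j, (∑ i, V j i * uhat j i) - a j =
      ((-1) ^ (j : ℕ) / D j) * ∑ ν : Fin (r + 1), (-1) ^ ((ν : ℕ) + 1) * a ν * D ν := by
  intro j
  have h := residual_mul_det (huhat j)
  simp only [← hD] at h
  rw [div_mul_eq_mul_div, eq_div_iff (hDne j), ← h]
  rfl

/-- Dzyadyk residual formula: for an inconsistent system `Vu = a`,
`⟨v^j, û^j⟩ − a_j = ((−1)^{j+1}/D_j) Σ_ν (−1)^ν a_ν D_ν` (1-based indices in the paper,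
here translated to 0-based `Fin` indices). -/
theorem stmt_8 (r : ℕ) (V : Matrix (Fin (r + 1)) (Fin r) ℝ) (a : Fin (r + 1) → ℝ)
    (hinc : ¬∃ u : Fin r → ℝ, V.mulVec u = a)
    (D : Fin (r + 1) → ℝ) (hD : ∀ j, D j = (V.submatrix (Fin.succAbove j) id).det)
    (hDne : ∀ j, D j ≠ 0)
    (uhat : Fin (r + 1) → Fin r → ℝ)
    (huhat : ∀ j, (V.submatrix (Fin.succAbove j) id).mulVec (uhat j) =
      fun k => a (Fin.succAbove j k)) :
    ∀ j, (∑ i, V j i * uhat j i) - a j =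
      ((-1) ^ (j : ℕ) / D j) * ∑ ν : Fin (r + 1), (-1) ^ ((ν : ℕ) + 1) * a ν * D ν :=
  stmt_8_general r V a D hD hDne uhat huhat
end

section
/- (Dzyadyk, best equidistant point) For an inconsistent system Vu = a with V ∈ ℝ^{(r+1)×r} where all D_j ≠ 0, the point u* = (Σ_j |D_j| û^j) / (Σ_j |D_j|) satisfies |⟨v^j, u*⟩ − a_j| = ρ* for all j = 1,…,r+1, where ρ* = |Σ_j (−1)^j D_j a_j| / Σ_j |D_j|; moreover ρ* is the minimal possible common residual magnitude among all equidistant points. -/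
/-!
The signed maximal minors `(-1)^j D_j` form a left null vector of `V`, so for every `u` the
signed sum `Σ_j (-1)^j D_j r_j(u)` of the residuals `r(u) = Vu - a` equals the constant
`-Σ_j (-1)^j D_j a_j`. For an equidistant `u` with residual modulus `ρ` the triangle inequality
turns this into `|Σ_j (-1)^j D_j a_j| ≤ ρ Σ_j |D_j|`. The point `û^k` has a single nonzero
residual, at row `k`, which the identity therefore pins down to `|D_k| |r_k(û^k)| = |Σ_j (-1)^j D_j a_j|`.
Residuals are affine in `u`, so the weighted mean `u*` has `r_j(u*) = |D_j| r_j(û^j) / Σ_k |D_k|`,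
of modulus exactly `ρ*`.
-/

open Matrix Finset

namespace Matrix

variable {R : Type*} {n : ℕ}

section CommRing

variable [CommRing R]

def signedMinors (V : Matrix (Fin (n + 1)) (Fin n) R) : Fin (n + 1) → R :=
  fun j => (-1) ^ (j : ℕ) * (V.submatrix j.succAbove id).det

theorem signedMinors_vecMul (V : Matrix (Fin (n + 1)) (Fin n) R) : signedMinors V ᵥ* V = 0 := by
  ext c
  -- Expand along the last column the determinant of `V` with its column `c` appended.
  let M : Matrix (Fin (n + 1)) (Fin (n + 1)) R := of fun j => Fin.snoc (V j) (V j c)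
  have hM : M.det = 0 := det_zero_of_column_eq (Fin.castSucc_lt_last c).ne (by simp [M])
  have hminor : ∀ i : Fin (n + 1),
      M.submatrix i.succAbove (Fin.last n).succAbove = V.submatrix i.succAbove id := by
    intro i; ext k l; simp [M, Fin.succAbove_last]
  rw [det_succ_column M (Fin.last n)] at hM
  simp only [hminor] at hM
  have : (-1) ^ n * (signedMinors V ᵥ* V) c = 0 := by
    rw [← hM, vecMul, dotProduct, mul_sum]
    refine sum_congr rfl fun i _ => ?_
    simp only [signedMinors, Fin.val_last, pow_add, of_apply, Fin.snoc_last, M]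
    ring
  simpa using this

theorem signedMinors_dotProduct_mulVec (V : Matrix (Fin (n + 1)) (Fin n) R) (u : Fin n → R) :
    signedMinors V ⬝ᵥ (V *ᵥ u) = 0 := by
  rw [dotProduct_mulVec, signedMinors_vecMul, zero_dotProduct]

theorem signedMinors_dotProduct_mulVec_sub (V : Matrix (Fin (n + 1)) (Fin n) R) (u : Fin n → R)
    (a : Fin (n + 1) → R) : signedMinors V ⬝ᵥ (V *ᵥ u - a) = -(signedMinors V ⬝ᵥ a) := by
  rw [dotProduct_sub, signedMinors_dotProduct_mulVec, zero_sub]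

theorem mulVec_sub_apply_eq_zero_of_submatrix_succAbove {m : Type*} [Fintype m]
    {V : Matrix (Fin (n + 1)) m R} {a : Fin (n + 1) → R} {k : Fin (n + 1)} {u : m → R}
    (hu : (V.submatrix k.succAbove id) *ᵥ u = fun i => a (k.succAbove i))
    {j : Fin (n + 1)} (hj : j ≠ k) : (V *ᵥ u - a) j = 0 := by
  obtain ⟨i, rfl⟩ := Fin.exists_succAbove_eq hj
  exact sub_eq_zero.2 (congrFun hu i)

theorem signedMinors_mul_mulVec_sub_apply_self {V : Matrix (Fin (n + 1)) (Fin n) R}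
    {a : Fin (n + 1) → R} {k : Fin (n + 1)} {u : Fin n → R}
    (hu : (V.submatrix k.succAbove id) *ᵥ u = fun i => a (k.succAbove i)) :
    signedMinors V k * (V *ᵥ u - a) k = -(signedMinors V ⬝ᵥ a) := by
  rw [← signedMinors_dotProduct_mulVec_sub V u, dotProduct, sum_eq_single k]
  · intro j _ hj
    rw [mulVec_sub_apply_eq_zero_of_submatrix_succAbove hu hj, mul_zero]
  · simp

theorem mulVec_sum_smul_sub {m ι : Type*} [Fintype m] (V : Matrix (Fin (n + 1)) m R)
    (a : Fin (n + 1) → R) (s : Finset ι) (w : ι → R) (hw : ∑ k ∈ s, w k = 1) (u : ι → m → R) :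
    V *ᵥ (∑ k ∈ s, w k • u k) - a = ∑ k ∈ s, w k • (V *ᵥ u k - a) := by
  simp only [mulVec_sum, mulVec_smul, smul_sub, sum_sub_distrib, ← sum_smul, hw, one_smul]

theorem mulVec_sum_smul_sub_apply {m : Type*} [Fintype m] {V : Matrix (Fin (n + 1)) m R}
    {a : Fin (n + 1) → R} {uhat : Fin (n + 1) → m → R}
    (huhat : ∀ k, (V.submatrix k.succAbove id) *ᵥ uhat k = fun i => a (k.succAbove i))
    {w : Fin (n + 1) → R} (hw : ∑ k, w k = 1) (j : Fin (n + 1)) :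
    (V *ᵥ (∑ k, w k • uhat k) - a) j = w j * (V *ᵥ uhat j - a) j := by
  rw [mulVec_sum_smul_sub V a _ w hw, Finset.sum_apply, sum_eq_single j]
  · rfl
  · intro k _ hk
    simp [mulVec_sub_apply_eq_zero_of_submatrix_succAbove (huhat k) (Ne.symm hk)]
  · simp

end CommRing

theorem abs_signedMinors_dotProduct_le_of_abs_mulVec_sub_eq [Field R] [LinearOrder R]
    [IsStrictOrderedRing R] (V : Matrix (Fin (n + 1)) (Fin n) R) (a : Fin (n + 1) → R)
    {u : Fin n → R} {ρ : R} (hu : ∀ j, |(V *ᵥ u - a) j| = ρ) :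
    |signedMinors V ⬝ᵥ a| ≤ (∑ j, |signedMinors V j|) * ρ :=
  calc |signedMinors V ⬝ᵥ a| = |∑ j, signedMinors V j * (V *ᵥ u - a) j| := by
        rw [← abs_neg, ← signedMinors_dotProduct_mulVec_sub V u, dotProduct]
    _ ≤ ∑ j, |signedMinors V j * (V *ᵥ u - a) j| := abs_sum_le_sum_abs _ _
    _ = (∑ j, |signedMinors V j|) * ρ := by simp only [abs_mul, hu, sum_mul]

end Matrix

theorem stmt_9_general (r : ℕ) (V : Matrix (Fin (r + 1)) (Fin r) ℝ) (a : Fin (r + 1) → ℝ)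
    (D : Fin (r + 1) → ℝ) (hD : ∀ j, D j = (V.submatrix (Fin.succAbove j) id).det)
    (hDne : ∀ j, D j ≠ 0)
    (uhat : Fin (r + 1) → Fin r → ℝ)
    (huhat : ∀ j, (V.submatrix (Fin.succAbove j) id).mulVec (uhat j) =
      fun k => a (Fin.succAbove j k))
    (ustar : Fin r → ℝ)
    (hustar : ustar = (∑ j, |D j|)⁻¹ • ∑ j, |D j| • uhat j)
    (ρstar : ℝ)
    (hρ : ρstar = |∑ j : Fin (r + 1), (-1) ^ ((j : ℕ) + 1) * D j * a j| / ∑ j, |D j|) :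
    (∀ j, |(∑ i, V j i * ustar i) - a j| = ρstar) ∧
    ∀ (u : Fin r → ℝ) (ρ : ℝ), (∀ j, |(∑ i, V j i * u i) - a j| = ρ) → ρstar ≤ ρ := by
  have hDabs : ∀ j, |D j| = |signedMinors V j| := by simp [signedMinors, hD, abs_mul]
  have hsum : ∑ j : Fin (r + 1), (-1) ^ ((j : ℕ) + 1) * D j * a j = -(signedMinors V ⬝ᵥ a) := by
    simp [dotProduct, signedMinors, hD, pow_succ, ← sum_neg_distrib]
  set S := ∑ j, |D j|
  have hS : 0 < S := sum_pos' (fun j _ => abs_nonneg _) ⟨0, mem_univ _, abs_pos.2 (hDne 0)⟩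
  have hw : ∑ k, |D k| / S = 1 := by rw [← sum_div, div_self hS.ne']
  have hustar' : ustar = ∑ k, (|D k| / S) • uhat k := by
    simp only [hustar, smul_sum, smul_smul, div_eq_inv_mul]
  rw [hρ, hsum, abs_neg]
  refine ⟨fun j => ?_, fun u ρ hu => ?_⟩
  · change |(V *ᵥ ustar - a) j| = _
    rw [hustar', mulVec_sum_smul_sub_apply huhat hw, abs_mul, abs_div, abs_abs, abs_of_pos hS,
      hDabs, div_mul_eq_mul_div, ← abs_mul, signedMinors_mul_mulVec_sub_apply_self (huhat j),
      abs_neg]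
  · rw [div_le_iff₀ hS, mul_comm]
    simp only [S, hDabs]
    exact abs_signedMinors_dotProduct_le_of_abs_mulVec_sub_eq V a hu

/-- Dzyadyk best equidistant point: `u* = (Σ |D_j| û^j)/(Σ |D_j|)` is equidistant with
common residual `ρ* = |Σ (−1)^j D_j a_j| / Σ |D_j|`, and `ρ*` is minimal among
all equidistant points. -/
theorem stmt_9 (r : ℕ) (V : Matrix (Fin (r + 1)) (Fin r) ℝ) (a : Fin (r + 1) → ℝ)
    (hinc : ¬∃ u : Fin r → ℝ, V.mulVec u = a)
    (D : Fin (r + 1) → ℝ) (hD : ∀ j, D j = (V.submatrix (Fin.succAbove j) id).det)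
    (hDne : ∀ j, D j ≠ 0)
    (uhat : Fin (r + 1) → Fin r → ℝ)
    (huhat : ∀ j, (V.submatrix (Fin.succAbove j) id).mulVec (uhat j) =
      fun k => a (Fin.succAbove j k))
    (ustar : Fin r → ℝ)
    (hustar : ustar = (∑ j, |D j|)⁻¹ • ∑ j, |D j| • uhat j)
    (ρstar : ℝ)
    (hρ : ρstar = |∑ j : Fin (r + 1), (-1) ^ ((j : ℕ) + 1) * D j * a j| / ∑ j, |D j|) :
    (∀ j, |(∑ i, V j i * ustar i) - a j| = ρstar) ∧
    ∀ (u : Fin r → ℝ) (ρ : ℝ), (∀ j, |(∑ i, V j i * u i) - a j| = ρ) → ρstar ≤ ρ :=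
  stmt_9_general r V a D hD hDne uhat huhat ustar hustar ρstar hρ
end

section
/- (Kolmogorov criterion, sufficiency) Let V ∈ ℂ^{n×r}, a ∈ ℂ^n, û ∈ ℂ^r, and let E be the set of indices where |a_j − (Vû)_j| = ‖a − Vû‖_∞. If for every u ∈ ℂ^r, min_{j ∈ E} Re( (Vu)_j · conj(a_j − (Vû)_j) ) ≤ 0, then Vû is a best sup-norm approximation: ‖a − Vû‖_∞ ≤ ‖a − Vu‖_∞ for all u ∈ ℂ^r. -/
open Matrix

/- If the perturbation `d` makes a non-acute angle with the error `e` at a single point where `|e|`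
is maximal, moving from `p` to `q = p + d` cannot lower the error there, hence cannot lower the
sup norm. Applied to `p = V uhat` and `q = V u`, Kolmogorov's condition for the direction
`u - uhat` supplies exactly such a point. -/

theorem norm_le_norm_sub_of_inner_nonpos {E : Type*} [SeminormedAddCommGroup E]
    [InnerProductSpace ℝ E] {x y : E} (h : inner ℝ x y ≤ 0) : ‖x‖ ≤ ‖x - y‖ := by
  have hsq : ‖x‖ ^ 2 ≤ ‖x - y‖ ^ 2 := by
    rw [norm_sub_sq_real]
    nlinarith [sq_nonneg ‖y‖]
  exact (pow_le_pow_iff_left₀ (norm_nonneg _) (norm_nonneg _) two_ne_zero).mp hsq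

theorem pi_norm_sub_le_of_exists_re_mul_conj_nonpos {ι : Type*} [Fintype ι] {a p q : ι → ℂ}
    (h : ∃ j, ‖a j - p j‖ = ‖a - p‖ ∧ ((q j - p j) * starRingEnd ℂ (a j - p j)).re ≤ 0) :
    ‖a - p‖ ≤ ‖a - q‖ := by
  obtain ⟨j, hj_max, hj_re⟩ := h
  calc ‖a - p‖ = ‖a j - p j‖ := hj_max.symm
    _ ≤ ‖(a j - p j) - (q j - p j)‖ :=
        norm_le_norm_sub_of_inner_nonpos (by rwa [Complex.inner])
    _ = ‖(a - q) j‖ := by rw [Pi.sub_apply, sub_sub_sub_cancel_right]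
    _ ≤ ‖a - q‖ := norm_le_pi_norm _ j

/-- Kolmogorov criterion, sufficiency. -/
theorem stmt_10 (n r : ℕ) (V : Matrix (Fin n) (Fin r) ℂ) (a : Fin n → ℂ)
    (uhat : Fin r → ℂ)
    (hkol : ∀ u : Fin r → ℂ, ∃ j : Fin n,
      ‖a j - V.mulVec uhat j‖ = ‖a - V.mulVec uhat‖ ∧
      (V.mulVec u j * (starRingEnd ℂ) (a j - V.mulVec uhat j)).re ≤ 0) :
    ∀ u : Fin r → ℂ, ‖a - V.mulVec uhat‖ ≤ ‖a - V.mulVec u‖ := by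
  intro u
  apply pi_norm_sub_le_of_exists_re_mul_conj_nonpos
  simpa only [mulVec_sub, Pi.sub_apply] using hkol (u - uhat)
end

section
/- (Remez criterion) Let V ∈ ℂ^{n×r}, a ∈ ℂ^n, û ∈ ℂ^r, and let E = {i_1,…,i_t} be the set of indices attaining the maximal residual magnitude for û. Then Vû is a best sup-norm approximation to a if and only if there exist δ_k ≥ 0 for k ∈ E, not all zero, such that Σ_{k ∈ E} δ_k · conj(a_k − ⟨û, v^k⟩) · v^k_j = 0 for every j = 1,…,r. -/
/-!
Write `e = a - V û`, so that the competitors are the vectors `e - V c`. Given weights `δ`,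
`(∑ δ) ‖e‖² = ∑ δ_k Re (conj e_k (e_k - (V c)_k)) ≤ (∑ δ) ‖e‖ ‖e - V c‖`, since the weights
sit on the extremal set and the weighted residual is orthogonal to the range of `V`.
Conversely, if `0` is not a convex combination of the vectors `conj e_k • v^k` with `k`
extremal, Hahn–Banach separation gives `c` with `Re (conj e_k (V c)_k) > 0` for every extremal
`k`; then `û + t c` for small `t > 0` strictly lowers every extremal residual while the others
stay below `‖e‖`.
-/

open Finset Filter Topology Matrix ComplexConjugate
open scoped RealInnerProductSpace

theorem exists_norm_eq_pi_norm {ι G : Type*} [Fintype ι] [Nonempty ι] [SeminormedAddCommGroup G]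
    (e : ι → G) : ∃ k, ‖e k‖ = ‖e‖ := by
  obtain ⟨k, -, hk⟩ := exists_mem_eq_sup univ univ_nonempty fun k => ‖e k‖₊
  exact ⟨k, by rw [Pi.norm_def, hk]; rfl⟩

section SupNorm

variable {ι F : Type*} [Fintype ι] [NormedAddCommGroup F] [InnerProductSpace ℝ F]

theorem eventually_norm_sub_smul_lt {x y : F} (h : 0 < ⟪x, y⟫) :
    ∀ᶠ t : ℝ in 𝓝[>] 0, ‖x - t • y‖ < ‖x‖ := by
  have hsmall : ∀ᶠ t : ℝ in 𝓝 0, t * ‖y‖ ^ 2 < 2 * ⟪x, y⟫ := by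
    have hlim : Tendsto (fun t : ℝ => t * ‖y‖ ^ 2) (𝓝 0) (𝓝 0) :=
      (continuous_mul_const _).tendsto' 0 0 (zero_mul _)
    exact hlim.eventually (gt_mem_nhds (by linarith))
  filter_upwards [nhdsWithin_le_nhds hsmall, self_mem_nhdsWithin] with t ht (htpos : 0 < t)
  have hsq : ‖x - t • y‖ ^ 2 = ‖x‖ ^ 2 - t * (2 * ⟪x, y⟫ - t * ‖y‖ ^ 2) := by
    rw [norm_sub_sq_real, real_inner_smul_right, norm_smul, mul_pow, Real.norm_eq_abs, sq_abs]
    ring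
  refine lt_of_pow_lt_pow_left₀ 2 (norm_nonneg _) ?_
  rw [hsq]
  exact sub_lt_self _ (mul_pos htpos (by linarith))

theorem exists_norm_sub_smul_lt [Nonempty ι] {e g : ι → F}
    (h : ∀ k, ‖e k‖ = ‖e‖ → 0 < ⟪e k, g k⟫) : ∃ t : ℝ, ‖e - t • g‖ < ‖e‖ := by
  obtain ⟨k₀, hk₀⟩ := exists_norm_eq_pi_norm e
  have hpos : 0 < ‖e‖ := by
    rw [← hk₀, norm_pos_iff]
    intro he
    simpa [he] using h k₀ hk₀
  have hcoord : ∀ k, ∀ᶠ t : ℝ in 𝓝[>] 0, ‖e k - t • g k‖ < ‖e‖ := by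
    intro k
    rcases (norm_le_pi_norm e k).eq_or_lt with hk | hk
    · simpa only [hk] using eventually_norm_sub_smul_lt (h k hk)
    · have hcont : Continuous fun t : ℝ => ‖e k - t • g k‖ := by fun_prop
      refine nhdsWithin_le_nhds (hcont.continuousAt.eventually_lt continuousAt_const ?_)
      simpa using hk
  obtain ⟨t, ht⟩ := (eventually_all.2 hcoord).exists
  exact ⟨t, (pi_norm_lt_iff hpos).2 ht⟩

theorem norm_le_norm_sub_of_sum_inner_eq_zero {e w : ι → F} {δ : ι → ℝ} (hδ : ∀ k, 0 ≤ δ k)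
    (hsupp : ∀ k, ‖e k‖ ≠ ‖e‖ → δ k = 0) (hne : δ ≠ 0) (horth : ∑ k, δ k * ⟪e k, w k⟫ = 0) :
    ‖e‖ ≤ ‖e - w‖ := by
  have hS : 0 < ∑ k, δ k := by
    obtain ⟨k, hk⟩ := Function.ne_iff.1 hne
    exact sum_pos' (fun k _ => hδ k) ⟨k, mem_univ k, (hδ k).lt_of_ne' hk⟩
  have hext : ∀ k, δ k * ⟪e k, e k⟫ = δ k * ‖e‖ ^ 2 := by
    intro k
    by_cases hk : ‖e k‖ = ‖e‖
    · rw [real_inner_self_eq_norm_sq, hk]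
    · simp [hsupp k hk]
  have hbound : ∀ k, δ k * ⟪e k, e k - w k⟫ ≤ δ k * (‖e‖ * ‖e - w‖) := fun k =>
    mul_le_mul_of_nonneg_left ((real_inner_le_norm _ _).trans <|
      mul_le_mul (norm_le_pi_norm e k) (norm_le_pi_norm (e - w) k) (norm_nonneg _)
        (norm_nonneg _)) (hδ k)
  have key : (∑ k, δ k) * ‖e‖ ^ 2 ≤ (∑ k, δ k) * (‖e‖ * ‖e - w‖) :=
    calc (∑ k, δ k) * ‖e‖ ^ 2 = ∑ k, δ k * ⟪e k, e k⟫ := by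
          rw [sum_mul]; exact sum_congr rfl fun k _ => (hext k).symm
      _ = ∑ k, δ k * ⟪e k, e k - w k⟫ := by
          simp only [inner_sub_right, mul_sub, sum_sub_distrib, horth, sub_zero]
      _ ≤ ∑ k, δ k * (‖e‖ * ‖e - w‖) := sum_le_sum fun k _ => hbound k
      _ = (∑ k, δ k) * (‖e‖ * ‖e - w‖) := (sum_mul ..).symm
  nlinarith [le_of_mul_le_mul_left key hS, norm_nonneg e, norm_nonneg (e - w)]

end SupNorm

/-- Gordan's theorem of the alternative. -/
theorem exists_forall_re_pos_or_exists_sum_smul_eq_zero {𝕜 ι E : Type*} [RCLike 𝕜] [Fintype ι]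
    [NormedAddCommGroup E] [NormedSpace ℝ E] [Module 𝕜 E] [IsScalarTower ℝ 𝕜 E]
    [ContinuousSMul 𝕜 E] (p : ι → E) (s : Set ι) :
    (∃ f : StrongDual 𝕜 E, ∀ k ∈ s, 0 < RCLike.re (f (p k))) ∨
      ∃ δ ∈ stdSimplex ℝ ι, (∀ k ∉ s, δ k = 0) ∧ ∑ k, δ k • p k = 0 := by
  classical
  set L := Fintype.linearCombination ℝ p
  set T := stdSimplex ℝ ι ∩ sᶜ.pi fun _ => {0}
  by_cases h0 : (0 : E) ∈ L '' T
  · obtain ⟨δ, ⟨hδ, hsupp⟩, hδ0⟩ := h0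
    exact Or.inr ⟨δ, hδ, fun k hk => hsupp k hk, hδ0⟩
  · have hT : IsCompact T := (isCompact_stdSimplex ℝ ι).inter_right <|
      isClosed_set_pi fun _ _ => isClosed_singleton
    have hconv : Convex ℝ T :=
      (convex_stdSimplex ℝ ι).inter <| convex_pi fun _ _ => convex_singleton 0
    obtain ⟨f, u, hf0, hfT⟩ := RCLike.geometric_hahn_banach_point_closed (𝕜 := 𝕜)
      (hconv.linear_image L) (hT.image L.continuous_of_finiteDimensional).isClosed h0
    refine Or.inl ⟨f, fun k hk => ?_⟩
    have hsingle : Pi.single k 1 ∈ T := ⟨single_mem_stdSimplex ℝ k, fun j hj =>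
      Pi.single_eq_of_ne (by rintro rfl; exact hj hk) _⟩
    have := hfT (p k) ⟨_, hsingle, by simp [L]⟩
    simp only [map_zero] at hf0
    linarith

section Matrix

variable {ι κ : Type*} [Fintype ι] [Fintype κ]

theorem exists_extremal_weights_of_forall_norm_le [Nonempty ι] (V : Matrix ι κ ℂ) {e : ι → ℂ}
    (h : ∀ c, ‖e‖ ≤ ‖e - V *ᵥ c‖) :
    ∃ δ : ι → ℝ, (∀ k, 0 ≤ δ k) ∧ (∀ k, ‖e k‖ ≠ ‖e‖ → δ k = 0) ∧ δ ≠ 0 ∧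
      ∀ j, ∑ k, (δ k : ℂ) * conj (e k) * V k j = 0 := by
  rcases exists_forall_re_pos_or_exists_sum_smul_eq_zero (𝕜 := ℂ) (fun k => conj (e k) • V k)
    {k | ‖e k‖ = ‖e‖} with ⟨f, hf⟩ | ⟨δ, hδ, hsupp, hsum⟩
  · exfalso
    set c : κ → ℂ := fun j => f (Pi.basisFun ℂ κ j)
    have hf_eq : ∀ z, f z = ∑ j, z j * c j := fun z => by
      conv_lhs => rw [← (Pi.basisFun ℂ κ).sum_repr z]
      simp [c]
    obtain ⟨t, ht⟩ := exists_norm_sub_smul_lt (e := e) (g := V *ᵥ c) fun k hk => by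
      convert hf k hk using 2
      rw [map_smul, hf_eq, Complex.inner, mul_comm]
      rfl
    have := h (t • c)
    rw [mulVec_smul] at this
    linarith
  · refine ⟨δ, hδ.1, hsupp, fun h0 => by simpa [h0] using hδ.2, fun j => ?_⟩
    simpa [Complex.real_smul, mul_assoc] using congrFun hsum j

theorem norm_le_norm_sub_mulVec_of_extremal_weights (V : Matrix ι κ ℂ) {e : ι → ℂ} {δ : ι → ℝ}
    (hδ : ∀ k, 0 ≤ δ k) (hsupp : ∀ k, ‖e k‖ ≠ ‖e‖ → δ k = 0) (hne : δ ≠ 0)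
    (horth : ∀ j, ∑ k, (δ k : ℂ) * conj (e k) * V k j = 0) (c : κ → ℂ) :
    ‖e‖ ≤ ‖e - V *ᵥ c‖ := by
  refine norm_le_norm_sub_of_sum_inner_eq_zero hδ hsupp hne ?_
  have hvec : (fun k => (δ k : ℂ) * conj (e k)) ᵥ* V = 0 := funext horth
  have hsum : ∑ k, (δ k : ℂ) * conj (e k) * (V *ᵥ c) k = 0 := by
    simpa [hvec, dotProduct] using dotProduct_mulVec (fun k => (δ k : ℂ) * conj (e k)) V c
  simpa [Complex.inner, Complex.re_sum, mul_comm, mul_left_comm] using congrArg Complex.re hsum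

theorem forall_norm_le_norm_sub_mulVec_iff [Nonempty ι] (V : Matrix ι κ ℂ) (e : ι → ℂ) :
    (∀ c, ‖e‖ ≤ ‖e - V *ᵥ c‖) ↔
      ∃ δ : ι → ℝ, (∀ k, 0 ≤ δ k) ∧ (∀ k, ‖e k‖ ≠ ‖e‖ → δ k = 0) ∧ δ ≠ 0 ∧
        ∀ j, ∑ k, (δ k : ℂ) * conj (e k) * V k j = 0 :=
  ⟨exists_extremal_weights_of_forall_norm_le V, fun ⟨_, hδ, hsupp, hne, horth⟩ =>
    norm_le_norm_sub_mulVec_of_extremal_weights V hδ hsupp hne horth⟩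

end Matrix

/-- Remez criterion: `Vû` is a best sup-norm approximation iff there are nonnegative,
not-all-zero `δ_k` supported on the extremal set `E` with
`Σ_{k∈E} δ_k conj(a_k − ⟨û,v^k⟩) v^k_j = 0` for all `j`. -/
theorem stmt_13 (n r : ℕ) (hn : 0 < n) (V : Matrix (Fin n) (Fin r) ℂ) (a : Fin n → ℂ)
    (uhat : Fin r → ℂ) :
    (∀ u : Fin r → ℂ, ‖a - V.mulVec uhat‖ ≤ ‖a - V.mulVec u‖) ↔
    ∃ δ : Fin n → ℝ, (∀ k, 0 ≤ δ k) ∧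
      (∀ k, ‖a k - ∑ i, uhat i * V k i‖ ≠ ‖a - V.mulVec uhat‖ → δ k = 0) ∧
      δ ≠ 0 ∧
      ∀ j, ∑ k, (δ k : ℂ) * (starRingEnd ℂ) (a k - ∑ i, uhat i * V k i) * V k j = 0 := by
  have : Nonempty (Fin n) := ⟨⟨0, hn⟩⟩
  have hres : ∀ k, a k - ∑ i, uhat i * V k i = (a - V *ᵥ uhat) k := fun k => by
    simp [mulVec, dotProduct, mul_comm]
  have hshift : ∀ u, a - V *ᵥ u = a - V *ᵥ uhat - V *ᵥ (u - uhat) := fun u => by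
    rw [mulVec_sub]; abel
  simp only [hres]
  rw [← forall_norm_le_norm_sub_mulVec_iff]
  refine ⟨fun h c => ?_, fun h u => hshift u ▸ h _⟩
  simpa only [hshift (uhat + c), add_sub_cancel_left] using h (uhat + c)
end

section
/- (Combinatorial solution formula) Let V ∈ ℝ^{n×r} be a Chebyshev system and a ∈ ℝ^n, n > r. Then inf_{u ∈ ℝ^r} ‖a − Vu‖_∞ equals the maximum, over all index sets i_1 < … < i_{r+1} from {1,…,n}, of |det[V(i_1,…,i_{r+1}) | a(i_1,…,i_{r+1})]| divided by Σ_{k=1}^{r+1} |det( V(i_1,…,i_{r+1}) with row k deleted )|. -/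
/-!
Expanding along the last column, `det [W | b] = c ⬝ᵥ b` for the vector `c` of signed cofactors,
and `c` annihilates the columns of `W`. Hence `det [W | b] = c ⬝ᵥ (b - W u)` for every `u`, so
`|det [W | b]| ≤ (∑ₖ |cₖ|) ‖b - W u‖_∞`: every ratio of the formula is a lower bound.
Conversely, when all minors are nonzero, `u` can be chosen on `r + 1` rows so that the residual
is `det [W | b] / ∑ₖ |cₖ|` times the sign pattern of `c`. So if `ρ` is the largest ratio, any
`r + 1` of the convex slabs `{u | |aᵢ - (V u)ᵢ| ≤ ρ}` in `ℝʳ` meet, and by Helly's theorem all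
of them do.
-/

open Matrix

namespace ChebyshevApproximation

section Algebra

variable {R : Type*} {r : ℕ} (W : Matrix (Fin (r + 1)) (Fin r) R)

def augment (b : Fin (r + 1) → R) : Matrix (Fin (r + 1)) (Fin (r + 1)) R :=
  of fun p q => Fin.lastCases (b p) (W p) q

@[simp]
theorem augment_apply_last (b : Fin (r + 1) → R) (p : Fin (r + 1)) :
    augment W b p (Fin.last r) = b p := by
  simp [augment]

@[simp]
theorem augment_apply_castSucc (b : Fin (r + 1) → R) (p : Fin (r + 1)) (i : Fin r) :
    augment W b p i.castSucc = W p i := by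
  simp [augment]

variable [CommRing R]

def cofactor (k : Fin (r + 1)) : R :=
  (-1) ^ (k + r : ℕ) * (W.submatrix k.succAbove id).det

theorem det_augment (b : Fin (r + 1) → R) : (augment W b).det = cofactor W ⬝ᵥ b := by
  rw [det_succ_column _ (Fin.last r), dotProduct]
  refine Finset.sum_congr rfl fun k _ => ?_
  have hminor : (augment W b).submatrix k.succAbove (Fin.last r).succAbove =
      W.submatrix k.succAbove id := by
    ext p i
    simp
  rw [hminor, augment_apply_last, cofactor, Fin.val_last]
  ring

theorem cofactor_vecMul : cofactor W ᵥ* W = 0 := by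
  ext j
  rw [vecMul, ← det_augment, Pi.zero_apply]
  exact det_zero_of_column_eq (Fin.castSucc_lt_last j).ne fun p => by simp

theorem det_augment_eq_cofactor_dotProduct_sub (b : Fin (r + 1) → R) (u : Fin r → R) :
    (augment W b).det = cofactor W ⬝ᵥ (b - W *ᵥ u) := by
  rw [dotProduct_sub, dotProduct_mulVec, cofactor_vecMul, zero_dotProduct, sub_zero,
    det_augment]

end Algebra

section Field

variable {K : Type*} [Field K] {r : ℕ} (W : Matrix (Fin (r + 1)) (Fin r) K)

theorem exists_mulVec_eq_of_cofactor_dotProduct_eq_zero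
    (hW : (W.submatrix Fin.castSucc id).det ≠ 0) {y : Fin (r + 1) → K}
    (hy : cofactor W ⬝ᵥ y = 0) : ∃ u, W *ᵥ u = y := by
  set A := W.submatrix Fin.castSucc id
  refine ⟨A⁻¹ *ᵥ (y ∘ Fin.castSucc), ?_⟩
  set z := W *ᵥ (A⁻¹ *ᵥ (y ∘ Fin.castSucc)) - y
  have hz_castSucc : ∀ p : Fin r, z p.castSucc = 0 := fun p => by
    change (A *ᵥ (A⁻¹ *ᵥ (y ∘ Fin.castSucc))) p - y p.castSucc = 0
    rw [mulVec_mulVec, mul_nonsing_inv _ hW.isUnit, one_mulVec, Function.comp_apply, sub_self]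
  have hz : cofactor W ⬝ᵥ z = 0 := by
    rw [dotProduct_sub, dotProduct_mulVec, cofactor_vecMul, zero_dotProduct, hy, sub_self]
  have hlast : cofactor W (Fin.last r) ≠ 0 := by
    rw [cofactor, Fin.succAbove_last]
    exact mul_ne_zero (pow_ne_zero _ (neg_ne_zero.mpr one_ne_zero)) hW
  rw [dotProduct, Fin.sum_univ_castSucc] at hz
  simp only [hz_castSucc, mul_zero, Finset.sum_const_zero, zero_add, mul_eq_zero, hlast,
    false_or] at hz
  ext k
  induction k using Fin.lastCases with
  | last => exact sub_eq_zero.mp hz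
  | cast p => exact sub_eq_zero.mp (hz_castSucc p)

end Field

section Ordered

variable {K : Type*} [Field K] [LinearOrder K] [IsStrictOrderedRing K] {r : ℕ}
  (W : Matrix (Fin (r + 1)) (Fin r) K) (b : Fin (r + 1) → K)

theorem abs_cofactor (k : Fin (r + 1)) :
    |cofactor W k| = |(W.submatrix k.succAbove id).det| := by
  simp [cofactor, abs_mul]

def chebyshevRatio : K :=
  |(augment W b).det| / ∑ k : Fin (r + 1), |(W.submatrix k.succAbove id).det|

theorem chebyshevRatio_le {u : Fin r → K} {ε : K} (h : ∀ k, |b k - (W *ᵥ u) k| ≤ ε) :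
    chebyshevRatio W b ≤ ε := by
  have hε : 0 ≤ ε := (abs_nonneg _).trans (h 0)
  rcases (Finset.sum_nonneg fun k _ => abs_nonneg _ :
    0 ≤ ∑ k : Fin (r + 1), |(W.submatrix k.succAbove id).det|).eq_or_lt with hS | hS
  · rwa [chebyshevRatio, ← hS, div_zero]
  rw [chebyshevRatio, div_le_iff₀ hS, det_augment_eq_cofactor_dotProduct_sub W b u, dotProduct,
    mul_comm ε, Finset.sum_mul]
  refine (Finset.abs_sum_le_sum_abs _ _).trans (Finset.sum_le_sum fun k _ => ?_)
  rw [abs_mul, abs_cofactor]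
  exact mul_le_mul_of_nonneg_left (h k) (abs_nonneg _)

theorem exists_forall_abs_sub_mulVec_eq
    (hW : ∀ k : Fin (r + 1), (W.submatrix k.succAbove id).det ≠ 0) :
    ∃ u, ∀ k, |b k - (W *ᵥ u) k| = chebyshevRatio W b := by
  set S := ∑ k : Fin (r + 1), |(W.submatrix k.succAbove id).det|
  have hS : S ≠ 0 := (Finset.sum_pos (fun k _ => abs_pos.mpr (hW k)) Finset.univ_nonempty).ne'
  -- the residual to aim for: equioscillation with the sign pattern of the cofactors
  set e : Fin (r + 1) → K := fun k => (augment W b).det / S * SignType.sign (cofactor W k)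
  have he : cofactor W ⬝ᵥ e = (augment W b).det := by
    simp only [e, dotProduct, mul_left_comm (cofactor W _), self_mul_sign, ← Finset.mul_sum,
      abs_cofactor]
    exact div_mul_cancel₀ _ hS
  obtain ⟨u, hu⟩ := exists_mulVec_eq_of_cofactor_dotProduct_eq_zero W
    (by simpa using hW (Fin.last r)) (y := b - e)
    (by rw [dotProduct_sub, he, det_augment, sub_self])
  refine ⟨u, fun k => ?_⟩
  have hsign : |(SignType.sign (cofactor W k) : K)| = 1 := by
    have hc : cofactor W k ≠ 0 := by rw [← abs_ne_zero, abs_cofactor, abs_ne_zero]; exact hW k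
    rcases hc.lt_or_gt with hc | hc <;> simp [hc]
  rw [hu, Pi.sub_apply, sub_sub_cancel, abs_mul, hsign, mul_one, abs_div,
    abs_of_nonneg (a := S) (Finset.sum_nonneg fun k _ => abs_nonneg _), chebyshevRatio]

end Ordered

section Helly

open Module

variable {K : Type*} [Field K] [LinearOrder K] [IsStrictOrderedRing K]
  {E : Type*} [AddCommGroup E] [Module K E]

theorem convex_setOf_abs_sub_le (ℓ : E →ₗ[K] K) (c ρ : K) : Convex K {x | |c - ℓ x| ≤ ρ} := by
  convert (convex_Icc (c - ρ) (c + ρ)).linear_preimage ℓ using 1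
  ext x
  simp only [Set.mem_ofPred_eq, Set.mem_preimage, Set.mem_Icc, abs_le]
  constructor <;> rintro ⟨h₁, h₂⟩ <;> constructor <;> linarith

theorem exists_forall_mem_of_forall_strictMono [FiniteDimensional K E] {d n : ℕ}
    (hd : finrank K E ≤ d) (hn : d < n) {s : Fin n → Set E} (hs : ∀ i, Convex K (s i))
    (h : ∀ f : Fin (d + 1) → Fin n, StrictMono f → ∃ x, ∀ k, x ∈ s (f k)) :
    ∃ x, ∀ i, x ∈ s i := by
  suffices (⋂ i ∈ (Finset.univ : Finset (Fin n)), s i).Nonempty by simpa using this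
  refine Convex.helly_theorem' (fun i _ => hs i) fun I _ hI => ?_
  obtain ⟨J, hIJ, -, hJ⟩ := Finset.exists_subsuperset_card_eq (Finset.subset_univ I)
    (hI.trans (Nat.succ_le_succ hd)) (by simpa using hn)
  obtain ⟨x, hx⟩ := h _ (J.orderEmbOfFin hJ).strictMono
  refine ⟨x, Set.mem_iInter₂.mpr fun i hi => ?_⟩
  obtain ⟨k, rfl⟩ : i ∈ Set.range (J.orderEmbOfFin hJ) := by
    rw [Finset.range_orderEmbOfFin]
    exact hIJ hi
  exact hx k

end Helly

end ChebyshevApproximation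

open ChebyshevApproximation in
/-- Combinatorial solution formula for the best Chebyshev approximation. -/
theorem stmt_14 (n r : ℕ) (hn : r < n) (V : Matrix (Fin n) (Fin r) ℝ) (a : Fin n → ℝ)
    (hcheb : ∀ f : Fin r → Fin n, Function.Injective f →
      (Matrix.of fun k i => V (f k) i).det ≠ 0) :
    (⨅ u : Fin r → ℝ, ‖a - V.mulVec u‖) =
      ⨆ f : {f : Fin (r + 1) → Fin n // StrictMono f},
        |(Matrix.of fun p q : Fin (r + 1) =>
            Fin.lastCases (a (f.1 p)) (fun i => V (f.1 p) i) q).det| /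
        ∑ k : Fin (r + 1),
          |(Matrix.of fun (p : Fin r) (i : Fin r) =>
              V (f.1 (Fin.succAbove k p)) i).det| := by
  set R : {f : Fin (r + 1) → Fin n // StrictMono f} → ℝ :=
    fun f => chebyshevRatio (V.submatrix f.1 id) (a ∘ f.1)
  change _ = ⨆ f, R f
  have : Nonempty {f : Fin (r + 1) → Fin n // StrictMono f} :=
    ⟨⟨Fin.castLE hn, Fin.strictMono_castLE hn⟩⟩
  set ρ := ⨆ f, R f
  refine le_antisymm ?_ (le_ciInf fun u => ciSup_le fun f =>
    chebyshevRatio_le _ _ fun k => norm_le_pi_norm (a - V *ᵥ u) (f.1 k))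
  obtain ⟨u, hu⟩ := exists_forall_mem_of_forall_strictMono (Module.finrank_fin_fun ℝ).le hn
    (s := fun i => {u | |a i - (V *ᵥ u) i| ≤ ρ})
    (fun i => convex_setOf_abs_sub_le ((LinearMap.proj i).comp V.mulVecLin) _ _)
    fun f hf => by
      obtain ⟨u, hu⟩ := exists_forall_abs_sub_mulVec_eq (V.submatrix f id) (a ∘ f)
        fun k => hcheb _ (hf.injective.comp Fin.succAbove_right_injective)
      exact ⟨u, fun k => (hu k).trans_le (le_ciSup (Finite.bddAbove_range R) ⟨f, hf⟩)⟩
  refine ciInf_le_of_le ⟨0, Set.forall_mem_range.mpr fun _ => norm_nonneg _⟩ u ?_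
  exact (pi_norm_le_iff_of_nonneg ((abs_nonneg _).trans (hu (Fin.castLE hn 0)))).mpr hu
end

section
/- (Sign alternation) Let V ∈ ℝ^{(r+1)×r} with all D_j = det(V with row j deleted) nonzero, a ∈ ℝ^{r+1} with Vu = a inconsistent, and let z* be the best equidistant point. Then with residual w = a − Vz*, the quantities w_1 D_1, w_2 D_2, …, w_{r+1} D_{r+1} have alternating signs: specifically w_j D_j = C·(−1)^j |D_j| for a constant C independent of j. -/
/-! The residual `a - V û^j` of each `û^j` vanishes off row `j`, say it equals `t_j e_j`; since
`a - V z` is affine in `z`, the residual of the weighted mean `z*` is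
`w = (∑ |D_k|)⁻¹ ∑ |D_k| t_k e_k`, i.e. `w_j = |D_j| t_j / ∑ |D_k|`. On the other hand, subtracting
`V û^j` from the first column of the bordered matrix `[a | V]` and expanding along that column gives
`det [a | V] = (-1)^j t_j D_j` for every `j`. Hence `w_j D_j = (-1)^j |D_j| det [a | V] / ∑ |D_k|`. -/

namespace Matrix

variable {R : Type*} {n : ℕ}

def consCol (x : Fin (n + 1) → R) (V : Matrix (Fin (n + 1)) (Fin n) R) :
    Matrix (Fin (n + 1)) (Fin (n + 1)) R :=
  of fun i => Fin.cons (x i) (V i)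

theorem consCol_eq_updateCol (x y : Fin (n + 1) → R) (V : Matrix (Fin (n + 1)) (Fin n) R) :
    consCol x V = (consCol y V).updateCol 0 x := by
  ext i k
  cases k using Fin.cases <;> simp [consCol, Fin.succ_ne_zero]

variable [CommRing R]

theorem det_consCol_add (x y : Fin (n + 1) → R) (V : Matrix (Fin (n + 1)) (Fin n) R) :
    (consCol (x + y) V).det = (consCol x V).det + (consCol y V).det := by
  rw [consCol_eq_updateCol x 0, consCol_eq_updateCol y 0, consCol_eq_updateCol (x + y) 0]
  exact det_updateCol_add _ _ _ _

theorem det_consCol_mulVec (V : Matrix (Fin (n + 1)) (Fin n) R) (u : Fin n → R) :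
    (consCol (V *ᵥ u) V).det = 0 := by
  have hcomb : V *ᵥ u = fun k => ∑ i, (Fin.cons 0 u : Fin (n + 1) → R) i • consCol 0 V k i := by
    ext k
    simp [Fin.sum_univ_succ, consCol, mulVec, dotProduct, mul_comm]
  rw [consCol_eq_updateCol _ 0, hcomb, det_updateCol_sum]
  simp

theorem det_consCol_add_mulVec (x : Fin (n + 1) → R) (V : Matrix (Fin (n + 1)) (Fin n) R)
    (u : Fin n → R) : (consCol (x + V *ᵥ u) V).det = (consCol x V).det := by
  rw [det_consCol_add, det_consCol_mulVec, add_zero]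

theorem det_consCol_single (j : Fin (n + 1)) (t : R) (V : Matrix (Fin (n + 1)) (Fin n) R) :
    (consCol (Pi.single j t) V).det = (-1) ^ (j : ℕ) * t * (V.submatrix j.succAbove id).det := by
  rw [det_succ_column_zero, Finset.sum_eq_single j]
  · simp only [consCol, of_apply, Pi.single_eq_same, Fin.cons_zero]
    rfl
  · intro i _ hij
    simp [consCol, hij]
  · simp

theorem sub_mulVec_eq_single_of_submatrix_mulVec {V : Matrix (Fin (n + 1)) (Fin n) R}
    {a : Fin (n + 1) → R} {u : Fin n → R} {j : Fin (n + 1)}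
    (h : (V.submatrix j.succAbove id) *ᵥ u = fun k => a (j.succAbove k)) :
    a - V *ᵥ u = Pi.single j (a j - (V *ᵥ u) j) := by
  ext i
  rcases eq_or_ne i j with rfl | hij
  · simp
  · obtain ⟨k, rfl⟩ := Fin.exists_succAbove_eq hij
    have hk : (V *ᵥ u) (j.succAbove k) = a (j.succAbove k) := congrFun h k
    simp [hij, hk]

theorem det_consCol_eq_of_submatrix_mulVec {V : Matrix (Fin (n + 1)) (Fin n) R}
    {a : Fin (n + 1) → R} {u : Fin n → R} {j : Fin (n + 1)}
    (h : (V.submatrix j.succAbove id) *ᵥ u = fun k => a (j.succAbove k)) :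
    (consCol a V).det =
      (-1) ^ (j : ℕ) * (a j - (V *ᵥ u) j) * (V.submatrix j.succAbove id).det := by
  calc (consCol a V).det
      = (consCol (Pi.single j (a j - (V *ᵥ u) j) + V *ᵥ u) V).det := by
        rw [← sub_mulVec_eq_single_of_submatrix_mulVec h, sub_add_cancel]
    _ = _ := by rw [det_consCol_add_mulVec, det_consCol_single]

theorem sub_mulVec_inv_sum_smul {K m n ι : Type*} [Field K] [Fintype n] [Fintype ι]
    (V : Matrix m n K) (a : m → K) (c : ι → K) (u : ι → n → K) (hc : ∑ i, c i ≠ 0) :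
    a - V *ᵥ ((∑ i, c i)⁻¹ • ∑ i, c i • u i) = (∑ i, c i)⁻¹ • ∑ i, c i • (a - V *ᵥ u i) := by
  simp only [smul_sub, Finset.sum_sub_distrib, ← Finset.sum_smul, smul_smul, inv_mul_cancel₀ hc,
    one_smul, mulVec_smul, mulVec_sum, Finset.smul_sum]

end Matrix

open Matrix in
/-- `j` is 0-based here and 1-based in the paper, hence the exponent `j + 1`. -/
theorem stmt_15_general (r : ℕ) (V : Matrix (Fin (r + 1)) (Fin r) ℝ) (a : Fin (r + 1) → ℝ)
    (D : Fin (r + 1) → ℝ) (hD : ∀ j, D j = (V.submatrix (Fin.succAbove j) id).det)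
    (hDne : ∀ j, D j ≠ 0)
    (uhat : Fin (r + 1) → Fin r → ℝ)
    (huhat : ∀ j, (V.submatrix (Fin.succAbove j) id).mulVec (uhat j) =
      fun k => a (Fin.succAbove j k))
    (zstar : Fin r → ℝ)
    (hz : zstar = (∑ j, |D j|)⁻¹ • ∑ j, |D j| • uhat j)
    (w : Fin (r + 1) → ℝ) (hw : w = a - V.mulVec zstar) :
    ∃ C : ℝ, ∀ j, w j * D j = C * (-1) ^ ((j : ℕ) + 1) * |D j| := by
  set S := ∑ j, |D j|
  set t : Fin (r + 1) → ℝ := fun j => a j - (V *ᵥ uhat j) j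
  have hS : S ≠ 0 := (Finset.sum_pos (fun j _ => abs_pos.2 (hDne j)) Finset.univ_nonempty).ne'
  have hwj : ∀ j, w j = S⁻¹ * (|D j| * t j) := fun j => by
    rw [hw, hz, sub_mulVec_inv_sum_smul _ _ _ _ hS]
    simp only [sub_mulVec_eq_single_of_submatrix_mulVec (huhat _)]
    simp [t, S, Pi.single_apply]
  have hdet : ∀ j : Fin (r + 1), (consCol a V).det = (-1) ^ (j : ℕ) * t j * D j := fun j => by
    rw [hD, det_consCol_eq_of_submatrix_mulVec (huhat j)]
  have hsq : ∀ j : Fin (r + 1), ((-1 : ℝ) ^ (j : ℕ)) ^ 2 = 1 := fun j => by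
    rw [← pow_mul, mul_comm, pow_mul, neg_one_sq, one_pow]
  refine ⟨-S⁻¹ * (consCol a V).det, fun j => ?_⟩
  rw [hwj, hdet j]
  linear_combination (-(S⁻¹ * t j * D j * |D j|)) * hsq j

/-- Sign alternation: with `w = a − Vz*` for the best equidistant point `z*`,
the quantities `w_j D_j` alternate in sign: `w_j D_j = C (−1)^j |D_j|`
(1-based `j` in the paper; 0-based here). -/
theorem stmt_15 (r : ℕ) (V : Matrix (Fin (r + 1)) (Fin r) ℝ) (a : Fin (r + 1) → ℝ)
    (ha : a ∉ Set.range V.mulVec)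
    (D : Fin (r + 1) → ℝ) (hD : ∀ j, D j = (V.submatrix (Fin.succAbove j) id).det)
    (hDne : ∀ j, D j ≠ 0)
    (uhat : Fin (r + 1) → Fin r → ℝ)
    (huhat : ∀ j, (V.submatrix (Fin.succAbove j) id).mulVec (uhat j) =
      fun k => a (Fin.succAbove j k))
    (zstar : Fin r → ℝ)
    (hz : zstar = (∑ j, |D j|)⁻¹ • ∑ j, |D j| • uhat j)
    (w : Fin (r + 1) → ℝ) (hw : w = a - V.mulVec zstar) :
    ∃ C : ℝ, ∀ j, w j * D j = C * (-1) ^ ((j : ℕ) + 1) * |D j| :=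
  stmt_15_general r V a D hD hDne uhat huhat zstar hz w hw
end
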